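/- For a directed graph G = ([s], E) in which every vertex has positive out-degree, the largest singular value σ₁ of the equal-neighbor adjacency matrix A satisfies σ₁² ≤ 1 + φ, where φ = (d_max⁻ − d_min⁺)/d_min⁺ and d_max⁻ is the maximum in-degree of G. -/

import Mathlib

/-!
`σ₁²` is the largest eigenvalue of `AᵀA`, and every eigenvalue of `AᵀA` is `‖A v‖²` for a unit
eigenvector `v`. The equal-neighbor matrix is nonnegative with column sums `1` and row sums
`∑_{j → i} 1/d_j⁺ ≤ d_max⁻/d_min⁺`, so the Schur test gives `‖A w‖² ≤ (d_max⁻/d_min⁺) ‖w‖²`,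
and `d_max⁻/d_min⁺ = 1 + φ`.
-/

open Finset Matrix

/-- The out-degree of vertex `j`: the number of `i` with an edge from `j` to `i`. -/
def outDeg {n : ℕ} (E : Fin n → Fin n → Bool) (j : Fin n) : ℕ :=
  (Finset.univ.filter fun i => E j i = true).card

/-- The in-degree of vertex `j`: the number of `i` with an edge from `i` to `j`. -/
def inDeg {n : ℕ} (E : Fin n → Fin n → Bool) (j : Fin n) : ℕ :=
  (Finset.univ.filter fun i => E i j = true).card

/-- Minimum out-degree. -/
noncomputable def dminOut {n : ℕ} (E : Fin n → Fin n → Bool) : ℕ := sInf (Set.range (outDeg E))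

/-- Maximum out-degree. -/
noncomputable def dmaxOut {n : ℕ} (E : Fin n → Fin n → Bool) : ℕ := sSup (Set.range (outDeg E))

/-- Maximum in-degree. -/
noncomputable def dmaxIn {n : ℕ} (E : Fin n → Fin n → Bool) : ℕ := sSup (Set.range (inDeg E))

/-- The equal-neighbor adjacency matrix: `A i j = 1 / d_j⁺` if there is an edge from `j`
to `i`, and `0` otherwise. -/
noncomputable def eqNbrMatrix {n : ℕ} (E : Fin n → Fin n → Bool) :
    Matrix (Fin n) (Fin n) ℝ :=
  fun i j => if E j i = true then (outDeg E j : ℝ)⁻¹ else 0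

/-- The `k`-th largest value (counted with multiplicity, `k = 0` being the largest) of a
real-valued function on a finite index type; junk value `0` if `k ≥ card ι`. -/
noncomputable def kthLargest {ι : Type*} [Fintype ι] (f : ι → ℝ) (k : ℕ) : ℝ :=
  if k < Fintype.card ι then
    ((Finset.univ.val.map f).sort (· ≤ ·)).getD (Fintype.card ι - 1 - k) 0
  else 0

/-- The `k`-th largest singular value of a real square matrix (`k = 0` is the largest),
i.e. the `k`-th largest square root of an eigenvalue of `AᴴA`. -/
noncomputable def sval {ι : Type*} [Fintype ι] [DecidableEq ι] (A : Matrix ι ι ℝ) (k : ℕ) : ℝ :=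
  kthLargest (fun i => Real.sqrt ((Matrix.isHermitian_conjTranspose_mul_self A).eigenvalues i)) k

namespace Matrix

variable {m n : Type*} [Fintype m] [Fintype n]

/-- **Schur test**, via Cauchy–Schwarz with weights `|A i j|`:
`(A w)ᵢ² ≤ (∑ⱼ |A i j|) (∑ⱼ |A i j| wⱼ²)`. -/
theorem sum_mulVec_sq_le_of_sum_abs_le (A : Matrix m n ℝ) {r c : ℝ} (hr : 0 ≤ r)
    (hrow : ∀ i, ∑ j, |A i j| ≤ r) (hcol : ∀ j, ∑ i, |A i j| ≤ c) (w : n → ℝ) :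
    ∑ i, (A *ᵥ w) i ^ 2 ≤ r * c * ∑ j, w j ^ 2 := by
  have hweighted : ∀ i, 0 ≤ ∑ j, |A i j| * w j ^ 2 := fun i =>
    sum_nonneg fun j _ => by positivity
  calc ∑ i, (A *ᵥ w) i ^ 2
      ≤ ∑ i, (∑ j, |A i j|) * ∑ j, |A i j| * w j ^ 2 := by
        refine sum_le_sum fun i _ => sum_sq_le_sum_mul_sum_of_sq_le_mul _
          (fun j _ => abs_nonneg _) (fun j _ => by positivity) fun j _ => ?_
        rw [mul_pow, ← sq_abs (A i j)]
        exact le_of_eq (by ring)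
    _ ≤ ∑ i, r * ∑ j, |A i j| * w j ^ 2 :=
        sum_le_sum fun i _ => mul_le_mul_of_nonneg_right (hrow i) (hweighted i)
    _ = r * ∑ j, (∑ i, |A i j|) * w j ^ 2 := by
        simp only [← mul_sum, sum_mul]
        rw [sum_comm]
    _ ≤ r * ∑ j, c * w j ^ 2 := by
        gcongr with j
        exact hcol j
    _ = r * c * ∑ j, w j ^ 2 := by rw [← mul_sum, mul_assoc]

theorem eigenvalues_conjTranspose_mul_self_le [DecidableEq n] (A : Matrix m n ℝ) {C : ℝ}
    (hA : ∀ w, ∑ i, (A *ᵥ w) i ^ 2 ≤ C * ∑ j, w j ^ 2) (j : n) :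
    (isHermitian_conjTranspose_mul_self A).eigenvalues j ≤ C := by
  set hH := isHermitian_conjTranspose_mul_self A
  have hgram : ∀ w : n → ℝ, star w ⬝ᵥ (Aᴴ * A) *ᵥ w = ∑ i, (A *ᵥ w) i ^ 2 := fun w => by
    rw [star_trivial, ← mulVec_mulVec, dotProduct_mulVec, conjTranspose_eq_transpose_of_trivial,
      vecMul_transpose]
    simp only [dotProduct, sq]
  have hunit : ∑ k, hH.eigenvectorBasis j k ^ 2 = 1 := by
    have := hH.eigenvectorBasis.orthonormal.1 j
    rw [EuclideanSpace.norm_eq, Real.sqrt_eq_one] at this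
    simpa using this
  calc hH.eigenvalues j = ∑ i, (A *ᵥ hH.eigenvectorBasis j) i ^ 2 := by
        rw [hH.eigenvalues_eq j, RCLike.re_to_real, hgram]
    _ ≤ C := by simpa only [hunit, mul_one] using hA (hH.eigenvectorBasis j)

end Matrix

lemma kthLargest_zero_mem {ι : Type*} [Fintype ι] [Nonempty ι] (f : ι → ℝ) :
    ∃ i, kthLargest f 0 = f i := by
  have hcard : 0 < Fintype.card ι := Fintype.card_pos
  have hlen : ((univ.val.map f).sort (· ≤ ·)).length = Fintype.card ι := by
    rw [Multiset.length_sort, Multiset.card_map, card_val, card_univ]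
  have hidx : Fintype.card ι - 1 - 0 < ((univ.val.map f).sort (· ≤ ·)).length := by
    omega
  rw [kthLargest, if_pos hcard, List.getD_eq_getElem _ _ hidx]
  obtain ⟨i, -, hi⟩ := Multiset.mem_map.mp ((Multiset.mem_sort _).mp (List.getElem_mem hidx))
  exact ⟨i, hi.symm⟩

theorem sval_zero_sq_le {ι : Type*} [Fintype ι] [DecidableEq ι] [Nonempty ι]
    (A : Matrix ι ι ℝ) {C : ℝ} (hA : ∀ w, ∑ i, (A *ᵥ w) i ^ 2 ≤ C * ∑ j, w j ^ 2) :
    sval A 0 ^ 2 ≤ C := by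
  obtain ⟨i, hi⟩ := kthLargest_zero_mem
    fun i => √((isHermitian_conjTranspose_mul_self A).eigenvalues i)
  rw [sval, hi, Real.sq_sqrt (eigenvalues_conjTranspose_mul_self_nonneg A i)]
  exact A.eigenvalues_conjTranspose_mul_self_le hA i

section EqualNeighbor

variable {s : ℕ} (E : Fin s → Fin s → Bool)

lemma dminOut_le_outDeg (j : Fin s) : dminOut E ≤ outDeg E j :=
  Nat.sInf_le ⟨j, rfl⟩

lemma inDeg_le_dmaxIn (j : Fin s) : inDeg E j ≤ dmaxIn E :=
  le_csSup (Set.finite_range _).bddAbove ⟨j, rfl⟩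

lemma dminOut_pos [Nonempty (Fin s)] (hdeg : ∀ j, 0 < outDeg E j) : 0 < dminOut E := by
  obtain ⟨j, hj⟩ := Nat.sInf_mem (Set.range_nonempty (outDeg E))
  rw [dminOut, ← hj]
  exact hdeg j

lemma eqNbrMatrix_nonneg (i j : Fin s) : 0 ≤ eqNbrMatrix E i j := by
  unfold eqNbrMatrix
  split <;> positivity

lemma sum_eqNbrMatrix_col {j : Fin s} (hj : 0 < outDeg E j) : ∑ i, eqNbrMatrix E i j = 1 := by
  simp only [eqNbrMatrix]
  rw [sum_ite, sum_const_zero, add_zero, sum_const, nsmul_eq_mul]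
  exact mul_inv_cancel₀ (Nat.cast_pos.mpr hj).ne'

lemma sum_eqNbrMatrix_row_le (hmin : 0 < dminOut E) (i : Fin s) :
    ∑ j, eqNbrMatrix E i j ≤ (dmaxIn E : ℝ) / dminOut E := by
  have hmin' : (0 : ℝ) < dminOut E := Nat.cast_pos.mpr hmin
  calc ∑ j, eqNbrMatrix E i j
      = ∑ j ∈ univ.filter (fun j => E j i = true), (outDeg E j : ℝ)⁻¹ := by
        simp only [eqNbrMatrix]
        rw [sum_filter]
    _ ≤ ∑ _j ∈ univ.filter (fun j => E j i = true), (dminOut E : ℝ)⁻¹ :=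
        sum_le_sum fun j _ => inv_anti₀ hmin' (Nat.cast_le.mpr (dminOut_le_outDeg E j))
    _ = inDeg E i / dminOut E := by
        rw [sum_const, nsmul_eq_mul, div_eq_mul_inv, inDeg]
    _ ≤ dmaxIn E / dminOut E := by
        gcongr
        exact_mod_cast inDeg_le_dmaxIn E i

end EqualNeighbor

/-- For a digraph in which every vertex has positive out-degree, the largest singular value
of the equal-neighbor adjacency matrix satisfies `σ₁² ≤ 1 + φ`, where
`φ = (d_max⁻ − d_min⁺)/d_min⁺`. -/
theorem stmt7 (s : ℕ) (hs : 0 < s) (E : Fin s → Fin s → Bool)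
    (hdeg : ∀ j : Fin s, 0 < outDeg E j)
    (φ : ℝ) (hφ : φ = ((dmaxIn E : ℝ) - (dminOut E : ℝ)) / (dminOut E : ℝ)) :
    sval (eqNbrMatrix E) 0 ^ 2 ≤ 1 + φ := by
  have : Nonempty (Fin s) := ⟨⟨0, hs⟩⟩
  have hmin := dminOut_pos E hdeg
  have habs : ∀ i j, |eqNbrMatrix E i j| = eqNbrMatrix E i j := fun i j =>
    abs_of_nonneg (eqNbrMatrix_nonneg E i j)
  have hschur := (eqNbrMatrix E).sum_mulVec_sq_le_of_sum_abs_le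
    (r := dmaxIn E / dminOut E) (by positivity)
    (fun i => by simpa only [habs] using sum_eqNbrMatrix_row_le E hmin i)
    (fun j => by simpa only [habs] using (sum_eqNbrMatrix_col E (hdeg j)).le)
  calc sval (eqNbrMatrix E) 0 ^ 2 ≤ dmaxIn E / dminOut E :=
        sval_zero_sq_le _ fun w => by simpa only [mul_one] using hschur w
    _ = 1 + φ := by
        have : (dminOut E : ℝ) ≠ 0 := by positivity
        rw [hφ]
        field_simp
        ring
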